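/- arXiv:2301.03321 — 4 statements merged into one kernel-verified Lean document; each statement's English description precedes it below -/
import Mathlib

section
/- The minimizer of x ↦ max_{i} (‖x - p_i‖² - w(p_i)) over a real Hilbert space is unique. That is, if both c₀ and c₁ attain the minimum value r² of this function, then c₀ = c₁. -/
/-!
Each function `x ↦ ‖x - p‖² - w` is strictly convex, since along a segment
`‖a • x + b • y - p‖² = a ‖x - p‖² + b ‖y - p‖² - a b ‖x - y‖²`. A finite maximum of strictly
convex functions is strictly convex, and a strictly convex function has at most one minimizer.
-/

open Finset

theorem StrictConvexOn.finset_sup' {𝕜 E β ι : Type*} [Semiring 𝕜] [PartialOrder 𝕜]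
    [AddCommMonoid E] [AddCommMonoid β] [LinearOrder β] [IsOrderedAddMonoid β]
    [SMul 𝕜 E] [Module 𝕜 β] [PosSMulMono 𝕜 β] {t : Set E} {s : Finset ι} (hs : s.Nonempty)
    {f : ι → E → β} (hf : ∀ i ∈ s, StrictConvexOn 𝕜 t (f i)) :
    StrictConvexOn 𝕜 t fun x ↦ s.sup' hs fun i ↦ f i x := by
  refine ⟨(hf _ hs.choose_spec).1, fun x hx y hy hxy a b ha hb hab ↦
    (sup'_lt_iff hs).2 fun i hi ↦ ?_⟩
  calc f i (a • x + b • y) < a • f i x + b • f i y := (hf i hi).2 hx hy hxy ha hb hab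
    _ ≤ a • s.sup' hs (fun j ↦ f j x) + b • s.sup' hs (fun j ↦ f j y) := by
      gcongr <;> exact le_sup' (fun j ↦ f j _) hi

section InnerProductSpace

variable {E : Type*} [NormedAddCommGroup E] [InnerProductSpace ℝ E]

theorem norm_smul_add_smul_sub_sq {a b : ℝ} (hab : a + b = 1) (x y p : E) :
    ‖a • x + b • y - p‖ ^ 2 = a * ‖x - p‖ ^ 2 + b * ‖y - p‖ ^ 2 - a * b * ‖x - y‖ ^ 2 := by
  have hcomb : a • x + b • y - p = a • (x - p) + b • (y - p) := by
    calc a • x + b • y - p = a • x + b • y - (a + b) • p := by rw [hab, one_smul]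
      _ = a • (x - p) + b • (y - p) := by module
  rw [hcomb, show x - y = (x - p) - (y - p) by abel]
  generalize x - p = u; generalize y - p = v
  rw [norm_add_sq_real, norm_sub_sq_real, norm_smul, norm_smul, real_inner_smul_left,
    real_inner_smul_right, mul_pow, mul_pow, Real.norm_eq_abs, Real.norm_eq_abs, sq_abs, sq_abs]
  obtain rfl := eq_sub_of_add_eq hab
  ring

theorem strictConvexOn_norm_sub_sq_sub (p : E) (c : ℝ) :
    StrictConvexOn ℝ Set.univ fun x ↦ ‖x - p‖ ^ 2 - c := by
  refine ⟨convex_univ, fun x _ y _ hne a b ha hb hab ↦ ?_⟩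
  have hxy : 0 < ‖x - y‖ := norm_pos_iff.2 (sub_ne_zero.2 hne)
  have hc : a * c + b * c = c := by rw [← add_mul, hab, one_mul]
  simp only [smul_eq_mul, norm_smul_add_smul_sub_sq hab]
  linarith [mul_pos (mul_pos ha hb) (pow_pos hxy 2)]

end InnerProductSpace

theorem stmt2_general {H : Type*} [NormedAddCommGroup H] [InnerProductSpace ℝ H]
    {ι : Type*} [Fintype ι] [Nonempty ι] (p : ι → H) (w : ι → ℝ) (c₀ c₁ : H)
    (h₀ : ∀ x : H,
      Finset.univ.sup' Finset.univ_nonempty (fun i => ‖c₀ - p i‖ ^ 2 - w i) ≤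
        Finset.univ.sup' Finset.univ_nonempty (fun i => ‖x - p i‖ ^ 2 - w i))
    (h₁ : ∀ x : H,
      Finset.univ.sup' Finset.univ_nonempty (fun i => ‖c₁ - p i‖ ^ 2 - w i) ≤
        Finset.univ.sup' Finset.univ_nonempty (fun i => ‖x - p i‖ ^ 2 - w i)) :
    c₀ = c₁ :=
  (StrictConvexOn.finset_sup' univ_nonempty
      (fun i _ ↦ strictConvexOn_norm_sub_sq_sub (p i) (w i))).eq_of_isMinOn
    (isMinOn_univ_iff.2 h₀) (isMinOn_univ_iff.2 h₁) (Set.mem_univ _) (Set.mem_univ _)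

theorem stmt2 {H : Type*} [NormedAddCommGroup H] [InnerProductSpace ℝ H] [CompleteSpace H]
    {ι : Type*} [Fintype ι] [Nonempty ι] (p : ι → H) (w : ι → ℝ) (c₀ c₁ : H)
    (h₀ : ∀ x : H,
      Finset.univ.sup' Finset.univ_nonempty (fun i => ‖c₀ - p i‖ ^ 2 - w i) ≤
        Finset.univ.sup' Finset.univ_nonempty (fun i => ‖x - p i‖ ^ 2 - w i))
    (h₁ : ∀ x : H,
      Finset.univ.sup' Finset.univ_nonempty (fun i => ‖c₁ - p i‖ ^ 2 - w i) ≤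
        Finset.univ.sup' Finset.univ_nonempty (fun i => ‖x - p i‖ ^ 2 - w i)) :
    c₀ = c₁ :=
  stmt2_general p w c₀ c₁ h₀ h₁
end

section
/- The center of the minimum enclosing power ball of a finite set of weighted points lies in the convex hull of the points attaining the maximum power distance from the center. More precisely, if c minimizes x ↦ max_i (‖x − p_i‖² − w(p_i)) over a real Hilbert space H, and I = {i : ‖c − p_i‖² − w(p_i) = r²} where r² is the minimum value, then c ∈ conv{p_i : i ∈ I}. -/
/-!
Suppose `c` were not in the convex hull `K` of the farthest points (in power distance). Let `q` be
the point of `K` nearest to `c`; moving `c` a little towards `q` strictly decreases the power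
distance to every point of `K`, since their inner product with the direction `q - c` exceeds that
of `c`, while the power distance to the remaining points stays below the maximum by continuity.
This lowers the maximum, contradicting the minimality of `c`.
-/

open Finset Filter Topology

open scoped RealInnerProductSpace

section InnerProductSpace

variable {H : Type*} [NormedAddCommGroup H] [InnerProductSpace ℝ H]

theorem exists_forall_inner_sub_pos_of_notMem {K : Set H} (hK : IsComplete K)
    (hKconv : Convex ℝ K) {c : H} (hc : c ∉ K) : ∃ v : H, ∀ y ∈ K, 0 < ⟪v, y - c⟫ := by
  rcases K.eq_empty_or_nonempty with rfl | hne
  · exact ⟨0, by simp⟩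
  obtain ⟨q, hqK, hq⟩ := exists_norm_eq_iInf_of_complete_convex hne hK hKconv c
  have hobtuse := (norm_eq_iInf_iff_real_inner_le_zero hKconv hqK).1 hq
  have hqc : 0 < ‖q - c‖ := norm_pos_iff.2 (sub_ne_zero.2 fun h => hc (h ▸ hqK))
  refine ⟨q - c, fun y hy => ?_⟩
  have hsplit : ⟪q - c, y - c⟫ = ‖q - c‖ ^ 2 - ⟪c - q, y - q⟫ := by
    rw [show y - c = (y - q) + (q - c) by abel, inner_add_right, real_inner_self_eq_norm_sq,
      ← neg_sub c q, inner_neg_left]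
    ring
  nlinarith [hobtuse y hy]

theorem norm_add_smul_sub_sq (c v p : H) (t : ℝ) :
    ‖c + t • v - p‖ ^ 2 = ‖c - p‖ ^ 2 - 2 * t * ⟪v, p - c⟫ + t ^ 2 * ‖v‖ ^ 2 := by
  rw [show c + t • v - p = (c - p) + t • v by abel, norm_add_sq_real, real_inner_smul_right,
    norm_smul, Real.norm_eq_abs, mul_pow, sq_abs, ← neg_sub p c, inner_neg_left,
    real_inner_comm]
  ring

end InnerProductSpace

theorem eventually_quadratic_lt {a b B M : ℝ} (ha : a ≤ M) (hb : a = M → 0 < b) :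
    ∀ᶠ t in 𝓝[>] 0, a - 2 * t * b + t ^ 2 * B < M := by
  have hcont : Continuous fun t : ℝ => a - 2 * t * b + t ^ 2 * B := by fun_prop
  rcases ha.lt_or_eq with hlt | rfl
  · refine nhdsWithin_le_nhds ((hcont.tendsto 0).eventually (gt_mem_nhds ?_))
    simpa using hlt
  · have hsmall : ∀ᶠ t in 𝓝[>] (0 : ℝ), t * B < 2 * b := by
      refine nhdsWithin_le_nhds (((continuous_id.mul continuous_const).tendsto 0).eventually
        (gt_mem_nhds ?_))
      simpa using hb rfl
    filter_upwards [hsmall, self_mem_nhdsWithin] with t ht (htpos : 0 < t)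
    nlinarith

theorem stmt4_general {H : Type*} [NormedAddCommGroup H] [InnerProductSpace ℝ H]
    {ι : Type*} [Fintype ι] [Nonempty ι] (p : ι → H) (w : ι → ℝ) (c : H)
    (hc : ∀ x : H,
      Finset.univ.sup' Finset.univ_nonempty (fun i => ‖c - p i‖ ^ 2 - w i) ≤
        Finset.univ.sup' Finset.univ_nonempty (fun i => ‖x - p i‖ ^ 2 - w i)) :
    c ∈ convexHull ℝ
      (p '' {i | ‖c - p i‖ ^ 2 - w i =
        Finset.univ.sup' Finset.univ_nonempty (fun j => ‖c - p j‖ ^ 2 - w j)}) := by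
  set r2 := univ.sup' univ_nonempty fun j => ‖c - p j‖ ^ 2 - w j
  set I : Set ι := {i | ‖c - p i‖ ^ 2 - w i = r2}
  by_contra hcI
  have hK : IsComplete (convexHull ℝ (p '' I)) :=
    (((Set.toFinite I).image p).isCompact_convexHull (𝕜 := ℝ)).isComplete
  obtain ⟨v, hv⟩ := exists_forall_inner_sub_pos_of_notMem hK (convex_convexHull ℝ _) hcI
  have hdecrease : ∀ᶠ t in 𝓝[>] (0 : ℝ), ∀ i, ‖c + t • v - p i‖ ^ 2 - w i < r2 := by
    refine Filter.eventually_all.2 fun i => ?_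
    have hi := eventually_quadratic_lt (b := ⟪v, p i - c⟫) (B := ‖v‖ ^ 2)
      (le_sup' (fun j => ‖c - p j‖ ^ 2 - w j) (mem_univ i))
      fun hiI => hv _ (subset_convexHull ℝ _ ⟨i, hiI, rfl⟩)
    filter_upwards [hi] with t ht
    rw [norm_add_smul_sub_sq]
    linarith
  obtain ⟨t, ht⟩ := hdecrease.exists
  exact (hc (c + t • v)).not_gt ((sup'_lt_iff _).2 fun i _ => ht i)

theorem stmt4 {H : Type*} [NormedAddCommGroup H] [InnerProductSpace ℝ H] [CompleteSpace H]
    {ι : Type*} [Fintype ι] [Nonempty ι] (p : ι → H) (w : ι → ℝ) (c : H)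
    (hc : ∀ x : H,
      Finset.univ.sup' Finset.univ_nonempty (fun i => ‖c - p i‖ ^ 2 - w i) ≤
        Finset.univ.sup' Finset.univ_nonempty (fun i => ‖x - p i‖ ^ 2 - w i)) :
    c ∈ convexHull ℝ
      (p '' {i | ‖c - p i‖ ^ 2 - w i =
        Finset.univ.sup' Finset.univ_nonempty (fun j => ‖c - p j‖ ^ 2 - w j)}) :=
  stmt4_general p w c hc
end

section
/- If for all i the quantity ‖c − p_i‖² − w(p_i) equals the same value r², and c = ∑_{i∈I} λ_i p_i is a convex combination, then r² = ∑_{i∈I} λ_i (‖c − p_i‖² − w(p_i)) = (1/2) ∑_{i,j∈I} λ_i λ_j D(p̂_i, p̂_j), where D(p̂_i, p̂_j) = ‖p_i − p_j‖² − w(p_i) − w(p_j). -/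
/-!
The first equality is the average of a constant. The second needs only that `c` is the barycenter,
whatever the powers: writing `p i - p j = (c - p j) - (c - p i)`, the pairwise squared distances
average to twice the mean of `‖c - p i‖ ^ 2` plus a cross term `‖∑ i, l i • (c - p i)‖ ^ 2`,
which vanishes because `c` is the barycenter; the weights `w i + w j` average to `2 * ∑ l i * w i`.
-/

open Finset
open scoped RealInnerProductSpace

section WeightedSums

variable {H : Type*} [NormedAddCommGroup H] [InnerProductSpace ℝ H] {ι : Type*} [Fintype ι]

theorem sum_sum_mul_inner_eq_norm_sq (l : ι → ℝ) (v : ι → H) :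
    ∑ i, ∑ j, l i * l j * ⟪v i, v j⟫ = ‖∑ i, l i • v i‖ ^ 2 := by
  rw [← real_inner_self_eq_norm_sq, sum_inner]
  simp only [inner_sum, real_inner_smul_left, real_inner_smul_right, mul_assoc, mul_left_comm]

theorem sum_smul_sub_eq_zero_of_eq_sum_smul {l : ι → ℝ} (hsum : ∑ i, l i = 1) (p : ι → H)
    {c : H} (hc : c = ∑ i, l i • p i) : ∑ i, l i • (c - p i) = 0 := by
  simp only [smul_sub, sum_sub_distrib, ← sum_smul, hsum, one_smul, ← hc, sub_self]

theorem sum_sum_mul_add_eq_two_mul_sum_mul {l : ι → ℝ} (hsum : ∑ i, l i = 1) (f : ι → ℝ) :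
    ∑ i, ∑ j, l i * l j * (f i + f j) = 2 * ∑ i, l i * f i := by
  simp only [mul_add, sum_add_distrib, ← sum_mul, ← mul_sum, mul_assoc, hsum, one_mul]
  ring

theorem sum_sum_mul_norm_sub_sq_eq_two_mul {l : ι → ℝ} (hsum : ∑ i, l i = 1) (p : ι → H)
    {c : H} (hc : c = ∑ i, l i • p i) :
    ∑ i, ∑ j, l i * l j * ‖p i - p j‖ ^ 2 = 2 * ∑ i, l i * ‖c - p i‖ ^ 2 := by
  have hexpand : ∀ i j, ‖p i - p j‖ ^ 2
      = (‖c - p i‖ ^ 2 + ‖c - p j‖ ^ 2) - 2 * ⟪c - p i, c - p j⟫ := by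
    intro i j
    rw [show p i - p j = (c - p j) - (c - p i) by abel, norm_sub_sq_real, real_inner_comm]
    ring
  have hcross : ∑ i, ∑ j, l i * l j * ⟪c - p i, c - p j⟫ = 0 := by
    rw [sum_sum_mul_inner_eq_norm_sq, sum_smul_sub_eq_zero_of_eq_sum_smul hsum p hc]
    simp
  simp only [hexpand, mul_sub, sum_sub_distrib,
    sum_sum_mul_add_eq_two_mul_sum_mul hsum (fun i => ‖c - p i‖ ^ 2)]
  simp only [mul_left_comm _ (2 : ℝ), ← mul_sum, hcross]
  ring

theorem half_sum_sum_mul_power_distance {l : ι → ℝ} (hsum : ∑ i, l i = 1) (p : ι → H)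
    (w : ι → ℝ) {c : H} (hc : c = ∑ i, l i • p i) :
    (1 / 2) * ∑ i, ∑ j, l i * l j * (‖p i - p j‖ ^ 2 - w i - w j)
      = ∑ i, l i * (‖c - p i‖ ^ 2 - w i) := by
  simp only [sub_sub, mul_sub, sum_sub_distrib, sum_sum_mul_norm_sub_sq_eq_two_mul hsum p hc,
    sum_sum_mul_add_eq_two_mul_sum_mul hsum w]
  ring

end WeightedSums

theorem stmt6_general {H : Type*} [NormedAddCommGroup H] [InnerProductSpace ℝ H]
    {ι : Type*} [Fintype ι] (p : ι → H) (w : ι → ℝ) (r2 : ℝ)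
    (l : ι → ℝ) (hsum : ∑ i, l i = 1)
    (c : H) (hc : c = ∑ i, l i • p i)
    (hr : ∀ i, ‖c - p i‖ ^ 2 - w i = r2) :
    r2 = ∑ i, l i * (‖c - p i‖ ^ 2 - w i) ∧
      r2 = (1 / 2) * ∑ i, ∑ j, l i * l j * (‖p i - p j‖ ^ 2 - w i - w j) := by
  have hmean : r2 = ∑ i, l i * (‖c - p i‖ ^ 2 - w i) := by
    simp only [hr, ← sum_mul, hsum, one_mul]
  exact ⟨hmean, hmean.trans (half_sum_sum_mul_power_distance hsum p w hc).symm⟩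

theorem stmt6 {H : Type*} [NormedAddCommGroup H] [InnerProductSpace ℝ H]
    {ι : Type*} [Fintype ι] (p : ι → H) (w : ι → ℝ) (r2 : ℝ)
    (l : ι → ℝ) (hl : ∀ i, 0 ≤ l i) (hsum : ∑ i, l i = 1)
    (c : H) (hc : c = ∑ i, l i • p i)
    (hr : ∀ i, ‖c - p i‖ ^ 2 - w i = r2) :
    r2 = ∑ i, l i * (‖c - p i‖ ^ 2 - w i) ∧
      r2 = (1 / 2) * ∑ i, ∑ j, l i * l j * (‖p i - p j‖ ^ 2 - w i - w j) :=
  stmt6_general p w r2 l hsum c hc hr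
end

section
/- (Simplex Distortion) Suppose points p_1,…,p_k lie in a real Hilbert space H with weights w_i, and q_1,…,q_k lie in a real Hilbert space H' with weights w'_i, and for all i, j: (1−ε) D(p̂_i,p̂_j) ≤ D'(q̂_i,q̂_j) ≤ (1+ε) D(p̂_i,p̂_j), where D(p̂_i,p̂_j) = ‖p_i − p_j‖² − w_i − w_j ≥ 0 and similarly for D'. Then the squared weighted radii satisfy (1−ε)·rad²({p̂_i}) ≤ rad²({q̂_i}) ≤ (1+ε)·rad²({p̂_i}), where rad²({p̂_i}) = min_{x∈H} max_i (‖x − p_i‖² − w_i). -/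
/-!
For weights `λ` in the standard simplex and any `x`, the parallel axis identity gives
`∑ λᵢ (‖x - pᵢ‖² - wᵢ) = ‖x - ∑ λᵢ pᵢ‖² + ½ ∑ λᵢ λⱼ D(p̂ᵢ, p̂ⱼ)`, so the quadratic form
`½ ∑ λᵢ λⱼ D(p̂ᵢ, p̂ⱼ)` never exceeds the squared radius. At a minimiser `c`, no direction decreases
all active power distances at once; separating `c` from the convex hull of the active points
shows `c = ∑ λᵢ pᵢ` with `λ` supported on active indices, and then equality holds. The distortion
bounds compare the two quadratic forms termwise, and the optimal weights of one configuration
serve as test weights for the other.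
-/

open Finset Filter Topology
open scoped RealInnerProductSpace

section

variable {E : Type*} [NormedAddCommGroup E] [InnerProductSpace ℝ E] {ι : Type*} [Fintype ι]

def maxPowerDist [Nonempty ι] (p : ι → E) (w : ι → ℝ) (x : E) : ℝ :=
  univ.sup' univ_nonempty fun i => ‖x - p i‖ ^ 2 - w i

lemma exists_forall_inner_neg_of_notMem {K : Set E} (hKc : IsComplete K) (hK : Convex ℝ K)
    {c : E} (hc : c ∉ K) : ∃ d : E, ∀ y ∈ K, ⟪c - y, d⟫ < 0 := by
  rcases K.eq_empty_or_nonempty with rfl | hne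
  · exact ⟨0, by simp⟩
  obtain ⟨b, hbK, hb⟩ := exists_norm_eq_iInf_of_complete_convex hne hKc hK c
  have hproj := (norm_eq_iInf_iff_real_inner_le_zero hK hbK).1 hb
  have hbc : 0 < ‖b - c‖ := norm_pos_iff.2 (sub_ne_zero.2 fun h => hc (h ▸ hbK))
  refine ⟨b - c, fun y hy => ?_⟩
  have key : ⟪c - y, b - c⟫ = ⟪c - b, y - b⟫ - ‖b - c‖ ^ 2 := by
    rw [← real_inner_self_eq_norm_sq, show c - y = -(y - b) - (b - c) by abel,
      show c - b = -(b - c) by abel, inner_sub_left, inner_neg_left, inner_neg_left,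
      real_inner_comm]
  rw [key]
  nlinarith [hproj y hy]

lemma eventually_norm_add_smul_sub_sq_sub_lt {c d v : E} {a r : ℝ}
    (hle : ‖c - v‖ ^ 2 - a ≤ r) (hact : ‖c - v‖ ^ 2 - a = r → ⟪c - v, d⟫ < 0) :
    ∀ᶠ t in 𝓝[>] (0 : ℝ), ‖c + t • d - v‖ ^ 2 - a < r := by
  have hexp : ∀ t : ℝ, ‖c + t • d - v‖ ^ 2 - a
      = (‖c - v‖ ^ 2 - a) + t * (2 * ⟪c - v, d⟫ + t * ‖d‖ ^ 2) := fun t => by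
    rw [show c + t • d - v = (c - v) + t • d by abel, norm_add_sq_real, real_inner_smul_right,
      norm_smul, mul_pow, Real.norm_eq_abs, sq_abs]
    ring
  rcases hle.lt_or_eq with hlt | heq
  · have hcont : Continuous fun t : ℝ => ‖c + t • d - v‖ ^ 2 - a := by fun_prop
    have := hcont.tendsto 0
    simp only [zero_smul, add_zero] at this
    exact nhdsWithin_le_nhds (this.eventually_lt_const hlt)
  · have hlim : Tendsto (fun t : ℝ => 2 * ⟪c - v, d⟫ + t * ‖d‖ ^ 2) (𝓝 0)
        (𝓝 (2 * ⟪c - v, d⟫)) :=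
      (by fun_prop : Continuous fun t : ℝ => 2 * ⟪c - v, d⟫ + t * ‖d‖ ^ 2).tendsto' 0 _ (by simp)
    have hslope : 2 * ⟪c - v, d⟫ < 0 := by linarith [hact heq]
    filter_upwards [self_mem_nhdsWithin, nhdsWithin_le_nhds (hlim.eventually_lt_const hslope)]
      with t ht hneg
    rw [hexp, heq]
    nlinarith [mul_neg_of_pos_of_neg (Set.mem_Ioi.1 ht) hneg]

lemma exists_active_inner_nonneg_of_forall_le [Nonempty ι] {p : ι → E} {w : ι → ℝ} {c : E}
    (hc : ∀ x, maxPowerDist p w c ≤ maxPowerDist p w x) (d : E) :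
    ∃ i, ‖c - p i‖ ^ 2 - w i = maxPowerDist p w c ∧ 0 ≤ ⟪c - p i, d⟫ := by
  by_contra! h
  have hdesc : ∀ᶠ t in 𝓝[>] (0 : ℝ), maxPowerDist p w (c + t • d) < maxPowerDist p w c := by
    simp only [maxPowerDist, sup'_lt_iff, mem_univ, true_imp_iff, eventually_all]
    exact fun i => eventually_norm_add_smul_sub_sq_sub_lt
      (le_sup' (fun j => ‖c - p j‖ ^ 2 - w j) (mem_univ i)) (h i)
  obtain ⟨t, ht⟩ := hdesc.exists
  exact (hc _).not_gt ht

theorem exists_stdSimplex_sum_smul_eq_of_forall_le [Nonempty ι] {p : ι → E} {w : ι → ℝ} {c : E}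
    (hc : ∀ x, maxPowerDist p w c ≤ maxPowerDist p w x) :
    ∃ lam ∈ stdSimplex ℝ ι, ∑ i, lam i • p i = c ∧
      ∀ i, lam i ≠ 0 → ‖c - p i‖ ^ 2 - w i = maxPowerDist p w c := by
  classical
  set s : Set ι := {i | ‖c - p i‖ ^ 2 - w i = maxPowerDist p w c}
  set T : Set (ι → ℝ) := stdSimplex ℝ ι ∩ {lam | ∀ i ∉ s, lam i = 0}
  have hT : IsCompact T := (isCompact_stdSimplex ℝ ι).inter_right <| by
    simp only [Set.ofPred_forall]
    exact isClosed_iInter fun i => isClosed_iInter fun _ =>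
      isClosed_eq (continuous_apply i) continuous_const
  have hTconv : Convex ℝ T := (convex_stdSimplex ℝ ι).inter fun x hx y hy a b _ _ _ i hi => by
    simp [hx i hi, hy i hi]
  -- `L '' T` is the convex hull of the active points
  set L := Fintype.linearCombination ℝ p
  have hcL : c ∈ L '' T := by
    by_contra hcL
    obtain ⟨d, hd⟩ := exists_forall_inner_neg_of_notMem
      (hT.image L.continuous_on_pi).isComplete (hTconv.linear_image L) hcL
    obtain ⟨i, hi, hid⟩ := exists_active_inner_nonneg_of_forall_le hc d
    have hpi : p i ∈ L '' T := ⟨Pi.single i 1,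
      ⟨single_mem_stdSimplex ℝ i, fun j hj => Pi.single_eq_of_ne (by rintro rfl; exact hj hi) _⟩,
      by simp [L, Fintype.linearCombination_apply]⟩
    exact (hd _ hpi).not_ge hid
  obtain ⟨lam, ⟨hlam, hsupp⟩, hlamc⟩ := hcL
  exact ⟨lam, hlam, hlamc, fun i hi => by_contra fun h => hi (hsupp i h)⟩

lemma sum_mul_norm_sub_sq_eq {p : ι → E} {lam : ι → ℝ} (hlam : ∑ i, lam i = 1) (x : E) :
    ∑ i, lam i * ‖x - p i‖ ^ 2 =
      ‖x - ∑ i, lam i • p i‖ ^ 2 + ∑ i, lam i * ‖∑ j, lam j • p j - p i‖ ^ 2 := by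
  set b := ∑ i, lam i • p i
  have hsplit : ∀ i, ‖x - p i‖ ^ 2 = ‖x - b‖ ^ 2 + 2 * ⟪x - b, b - p i⟫ + ‖b - p i‖ ^ 2 :=
    fun i => by rw [← norm_add_sq_real, sub_add_sub_cancel]
  have hcentre : ∑ i, lam i • (b - p i) = 0 := by
    simp only [smul_sub, sum_sub_distrib, ← sum_smul, hlam, one_smul, b, sub_self]
  have hcross : ∑ i, lam i * ⟪x - b, b - p i⟫ = 0 := by
    simp only [← real_inner_smul_right, ← inner_sum, hcentre, inner_zero_right]
  simp only [hsplit, mul_add, sum_add_distrib, ← sum_mul, hlam, one_mul, mul_left_comm (lam _) 2,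
    ← mul_sum, hcross, mul_zero, add_zero]

lemma sum_mul_norm_sub_sq_sub_eq {p : ι → E} {w lam : ι → ℝ} (hlam : ∑ i, lam i = 1) (x : E) :
    ∑ i, lam i * (‖x - p i‖ ^ 2 - w i) = ‖x - ∑ i, lam i • p i‖ ^ 2 +
      1 / 2 * ∑ i, ∑ j, lam i * lam j * (‖p i - p j‖ ^ 2 - w i - w j) := by
  set b := ∑ i, lam i • p i
  set A := ∑ i, lam i * ‖b - p i‖ ^ 2
  have hpair : ∑ i, ∑ j, lam i * lam j * ‖p i - p j‖ ^ 2 = 2 * A := by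
    calc ∑ i, ∑ j, lam i * lam j * ‖p i - p j‖ ^ 2
        = ∑ i, lam i * (‖p i - b‖ ^ 2 + A) := by
          simp only [mul_assoc, ← mul_sum]
          exact sum_congr rfl fun i _ => by rw [sum_mul_norm_sub_sq_eq hlam]
      _ = 2 * A := by
          simp only [mul_add, sum_add_distrib, ← sum_mul, hlam, norm_sub_rev (p _) b, A]
          ring
  have hweight : ∀ f : ι → ℝ, ∑ i, ∑ j, lam i * lam j * f i = ∑ i, lam i * f i := fun f => by
    simp only [mul_right_comm (lam _) (lam _), mul_assoc, ← mul_sum, hlam, mul_one]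
  have hweight' : ∑ i, ∑ j, lam i * lam j * w j = ∑ i, lam i * w i := by
    rw [sum_comm, ← hweight w]
    exact sum_congr rfl fun i _ => sum_congr rfl fun j _ => by ring
  simp only [mul_sub, sum_sub_distrib, hpair, hweight w, hweight', sum_mul_norm_sub_sq_eq hlam x]
  ring

lemma half_sum_le_maxPowerDist [Nonempty ι] (p : ι → E) (w : ι → ℝ) {lam : ι → ℝ}
    (hlam : lam ∈ stdSimplex ℝ ι) (x : E) :
    1 / 2 * ∑ i, ∑ j, lam i * lam j * (‖p i - p j‖ ^ 2 - w i - w j) ≤ maxPowerDist p w x := by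
  calc 1 / 2 * ∑ i, ∑ j, lam i * lam j * (‖p i - p j‖ ^ 2 - w i - w j)
      ≤ ∑ i, lam i * (‖x - p i‖ ^ 2 - w i) := by
        rw [sum_mul_norm_sub_sq_sub_eq hlam.2]
        exact le_add_of_nonneg_left (sq_nonneg _)
    _ ≤ ∑ i, lam i * maxPowerDist p w x :=
        sum_le_sum fun i _ => mul_le_mul_of_nonneg_left
          (le_sup' (fun j => ‖x - p j‖ ^ 2 - w j) (mem_univ i)) (hlam.1 i)
    _ = maxPowerDist p w x := by rw [← sum_mul, hlam.2, one_mul]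

theorem exists_stdSimplex_maxPowerDist_eq_half_sum [Nonempty ι] {p : ι → E} {w : ι → ℝ}
    {c : E} (hc : ∀ x, maxPowerDist p w c ≤ maxPowerDist p w x) :
    ∃ lam ∈ stdSimplex ℝ ι,
      maxPowerDist p w c = 1 / 2 * ∑ i, ∑ j, lam i * lam j * (‖p i - p j‖ ^ 2 - w i - w j) := by
  obtain ⟨lam, hlam, hlamc, hactive⟩ := exists_stdSimplex_sum_smul_eq_of_forall_le hc
  refine ⟨lam, hlam, ?_⟩
  calc maxPowerDist p w c = ∑ i, lam i * maxPowerDist p w c := by rw [← sum_mul, hlam.2, one_mul]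
    _ = ∑ i, lam i * (‖c - p i‖ ^ 2 - w i) := sum_congr rfl fun i _ => by
        rcases eq_or_ne (lam i) 0 with h | h
        · simp [h]
        · rw [hactive i h]
    _ = _ := by rw [sum_mul_norm_sub_sq_sub_eq hlam.2, hlamc, sub_self, norm_zero]; ring

lemma mul_sum_sum_le_mul_sum_sum {lam : ι → ℝ} (hlam : ∀ i, 0 ≤ lam i) {A B : ι → ι → ℝ}
    {a b : ℝ} (h : ∀ i j, a * A i j ≤ b * B i j) :
    a * ∑ i, ∑ j, lam i * lam j * A i j ≤ b * ∑ i, ∑ j, lam i * lam j * B i j := by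
  simp only [mul_sum]
  refine sum_le_sum fun i _ => sum_le_sum fun j _ => ?_
  calc a * (lam i * lam j * A i j) = lam i * lam j * (a * A i j) := by ring
    _ ≤ lam i * lam j * (b * B i j) :=
      mul_le_mul_of_nonneg_left (h i j) (mul_nonneg (hlam i) (hlam j))
    _ = b * (lam i * lam j * B i j) := by ring

end

theorem stmt9_general {H H' : Type*} [NormedAddCommGroup H] [InnerProductSpace ℝ H]
    [NormedAddCommGroup H'] [InnerProductSpace ℝ H']
    {ι : Type*} [Fintype ι] [Nonempty ι]
    (p : ι → H) (q : ι → H') (w w' : ι → ℝ)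
    (ε : ℝ) (hε : ε ∈ Set.Ioo (0 : ℝ) 1)
    (hlo : ∀ i j, (1 - ε) * (‖p i - p j‖ ^ 2 - w i - w j) ≤ ‖q i - q j‖ ^ 2 - w' i - w' j)
    (hhi : ∀ i j, ‖q i - q j‖ ^ 2 - w' i - w' j ≤ (1 + ε) * (‖p i - p j‖ ^ 2 - w i - w j))
    (cp : H) (cq : H')
    (hcp : ∀ x : H,
      Finset.univ.sup' Finset.univ_nonempty (fun i => ‖cp - p i‖ ^ 2 - w i) ≤
        Finset.univ.sup' Finset.univ_nonempty (fun i => ‖x - p i‖ ^ 2 - w i))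
    (hcq : ∀ x : H',
      Finset.univ.sup' Finset.univ_nonempty (fun i => ‖cq - q i‖ ^ 2 - w' i) ≤
        Finset.univ.sup' Finset.univ_nonempty (fun i => ‖x - q i‖ ^ 2 - w' i)) :
    (1 - ε) * Finset.univ.sup' Finset.univ_nonempty (fun i => ‖cp - p i‖ ^ 2 - w i) ≤
      Finset.univ.sup' Finset.univ_nonempty (fun i => ‖cq - q i‖ ^ 2 - w' i) ∧
    Finset.univ.sup' Finset.univ_nonempty (fun i => ‖cq - q i‖ ^ 2 - w' i) ≤
      (1 + ε) * Finset.univ.sup' Finset.univ_nonempty (fun i => ‖cp - p i‖ ^ 2 - w i) := by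
  obtain ⟨lam, hlam, hradp⟩ := exists_stdSimplex_maxPowerDist_eq_half_sum (p := p) (w := w) hcp
  obtain ⟨mu, hmu, hradq⟩ := exists_stdSimplex_maxPowerDist_eq_half_sum (p := q) (w := w') hcq
  change (1 - ε) * maxPowerDist p w cp ≤ maxPowerDist q w' cq ∧
    maxPowerDist q w' cq ≤ (1 + ε) * maxPowerDist p w cp
  constructor
  · calc (1 - ε) * maxPowerDist p w cp
        = 1 / 2 * ((1 - ε) * ∑ i, ∑ j, lam i * lam j * (‖p i - p j‖ ^ 2 - w i - w j)) := by
          rw [hradp]; ring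
      _ ≤ 1 / 2 * (1 * ∑ i, ∑ j, lam i * lam j * (‖q i - q j‖ ^ 2 - w' i - w' j)) := by
          gcongr ?_ * ?_
          exact mul_sum_sum_le_mul_sum_sum hlam.1 fun i j => (hlo i j).trans_eq (one_mul _).symm
      _ ≤ maxPowerDist q w' cq := by simpa using half_sum_le_maxPowerDist q w' hlam cq
  · calc maxPowerDist q w' cq
        = 1 / 2 * (1 * ∑ i, ∑ j, mu i * mu j * (‖q i - q j‖ ^ 2 - w' i - w' j)) := by
          rw [hradq]; ring
      _ ≤ 1 / 2 * ((1 + ε) * ∑ i, ∑ j, mu i * mu j * (‖p i - p j‖ ^ 2 - w i - w j)) := by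
          gcongr ?_ * ?_
          exact mul_sum_sum_le_mul_sum_sum hmu.1 fun i j => (one_mul _).trans_le (hhi i j)
      _ = (1 + ε) * (1 / 2 * ∑ i, ∑ j, mu i * mu j * (‖p i - p j‖ ^ 2 - w i - w j)) := by ring
      _ ≤ (1 + ε) * maxPowerDist p w cp := by
          gcongr
          · linarith [hε.1]
          · exact half_sum_le_maxPowerDist p w hmu cp

theorem stmt9 {H H' : Type*} [NormedAddCommGroup H] [InnerProductSpace ℝ H] [CompleteSpace H]
    [NormedAddCommGroup H'] [InnerProductSpace ℝ H'] [CompleteSpace H']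
    {ι : Type*} [Fintype ι] [Nonempty ι]
    (p : ι → H) (q : ι → H') (w w' : ι → ℝ)
    (ε : ℝ) (hε : ε ∈ Set.Ioo (0 : ℝ) 1)
    (hDnn : ∀ i j, 0 ≤ ‖p i - p j‖ ^ 2 - w i - w j)
    (hlo : ∀ i j, (1 - ε) * (‖p i - p j‖ ^ 2 - w i - w j) ≤ ‖q i - q j‖ ^ 2 - w' i - w' j)
    (hhi : ∀ i j, ‖q i - q j‖ ^ 2 - w' i - w' j ≤ (1 + ε) * (‖p i - p j‖ ^ 2 - w i - w j))
    (cp : H) (cq : H')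
    (hcp : ∀ x : H,
      Finset.univ.sup' Finset.univ_nonempty (fun i => ‖cp - p i‖ ^ 2 - w i) ≤
        Finset.univ.sup' Finset.univ_nonempty (fun i => ‖x - p i‖ ^ 2 - w i))
    (hcq : ∀ x : H',
      Finset.univ.sup' Finset.univ_nonempty (fun i => ‖cq - q i‖ ^ 2 - w' i) ≤
        Finset.univ.sup' Finset.univ_nonempty (fun i => ‖x - q i‖ ^ 2 - w' i)) :
    (1 - ε) * Finset.univ.sup' Finset.univ_nonempty (fun i => ‖cp - p i‖ ^ 2 - w i) ≤
      Finset.univ.sup' Finset.univ_nonempty (fun i => ‖cq - q i‖ ^ 2 - w' i) ∧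
    Finset.univ.sup' Finset.univ_nonempty (fun i => ‖cq - q i‖ ^ 2 - w' i) ≤
      (1 + ε) * Finset.univ.sup' Finset.univ_nonempty (fun i => ‖cp - p i‖ ^ 2 - w i) :=
  stmt9_general p q w w' ε hε hlo hhi cp cq hcp hcq
end
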